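/- The set of ultra-strong Liouville numbers is uncountable. -/

import Mathlib

/-- A real `ξ` is an ultra-strong Liouville number if the convergents of its continued
fraction satisfy `0 < |ξ - p_n/q_n| < 1/q_n^n` for all `n ≥ 1`. -/
def UltraStrongLiouville (ξ : ℝ) : Prop :=
  ∀ n : ℕ, 1 ≤ n →
    0 < |ξ - (GenContFract.of ξ).convs n| ∧
    |ξ - (GenContFract.of ξ).convs n| < 1 / ((GenContFract.of ξ).dens n) ^ n

/-!
For `s : ℕ → Fin 2` take the real `ξ_s = [2; a₁, a₂, …]` with partial quotients
`a_{n+1} = P_n ^ n + 1 + s n`, where `P_n = ∏_{1 ≤ i ≤ n} (a_i + 1)` bounds the `n`-th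
denominator `q_n` (as `q_{n+1} = a_{n+1} q_n + q_{n-1} ≤ (a_{n+1} + 1) q_n`). Then
`|ξ_s - p_n/q_n| ≤ 1/(q_n q_{n+1}) ≤ 1/(a_{n+1} q_n²) < 1/q_n ^ n`, and `ξ_s` is irrational
since its continued fraction does not terminate. The partial quotients of `ξ_s` determine `s`,
so `s ↦ ξ_s` injects the uncountable set `ℕ → Fin 2` into the ultra-strong Liouville numbers.
-/

open Filter Set
open GenContFract (of)

namespace GenContFract

variable {K : Type*} [Field K] [LinearOrder K] [IsStrictOrderedRing K] [FloorRing K] {v : K}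
  {n : ℕ} {b : K}

theorem one_le_of_den (n : ℕ) : 1 ≤ (of v).dens n := by
  induction n with
  | zero => rw [zeroth_den_eq_one]
  | succ n ih => exact ih.trans of_den_mono

theorem den_succ_le_of_s_get? (h : (of v).s.get? n = some ⟨1, b⟩) :
    (of v).dens (n + 1) ≤ (b + 1) * (of v).dens n := by
  cases n with
  | zero => simp [first_den_eq h, zeroth_den_eq_one]
  | succ n =>
    rw [dens_recurrence h rfl rfl]
    linarith [of_den_mono (v := v) (n := n)]

theorem ne_convs_of_not_terminates (h : ¬(of v).Terminates) (n : ℕ) : v ≠ (of v).convs n := by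
  intro hv
  obtain ⟨q, hq⟩ := exists_rat_eq_nth_conv v n
  exact h ((terminates_iff_rat v).mpr ⟨q, hv.trans hq⟩)

theorem abs_sub_convs_lt_one_div_den_pow (h : (of v).s.get? n = some ⟨1, b⟩)
    (hb : (of v).dens n ^ n < b) : |v - (of v).convs n| < 1 / (of v).dens n ^ n := by
  have hn : ¬(of v).TerminatedAt n := by simp [terminatedAt_iff_s_none, h]
  have hq : 1 ≤ (of v).dens n := one_le_of_den n
  refine (abs_sub_convs_le hn).trans_lt (one_div_lt_one_div_of_lt (by positivity) ?_)
  calc (of v).dens n ^ n < b := hb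
    _ ≤ b * (of v).dens n := le_mul_of_one_le_right ((pow_nonneg zero_le_of_den n).trans hb.le) hq
    _ ≤ (of v).dens (n + 1) := le_of_succ_get?_den (partDen_eq_s_b h)
    _ ≤ (of v).dens n * (of v).dens (n + 1) :=
        le_mul_of_one_le_left (zero_le_one.trans (hq.trans of_den_mono)) hq

end GenContFract

noncomputable def finCFValue : ℕ → (ℕ → ℕ) → ℝ
  | 0, b => b 0
  | n + 1, b => b 0 + (finCFValue n fun i => b (i + 1))⁻¹

/-- The value of `[b 0; b 1, b 2, …]`; meaningful (the limit exists) when every `b i ≥ 2`. -/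
noncomputable def cfValue (b : ℕ → ℕ) : ℝ := limUnder atTop fun n => finCFValue n b

theorem abs_inv_sub_inv_le_of_two_le {x y : ℝ} (hx : 2 ≤ x) (hy : 2 ≤ y) :
    |x⁻¹ - y⁻¹| ≤ |x - y| / 4 := by
  rw [inv_sub_inv (by positivity) (by positivity), abs_div, abs_sub_comm,
    abs_of_pos (by positivity : 0 < x * y)]
  gcongr
  nlinarith

section TwoLe

variable {b : ℕ → ℕ}

theorem finCFValue_mem_Icc (hb : ∀ i, 2 ≤ b i) (n : ℕ) :
    finCFValue n b ∈ Icc (b 0 : ℝ) (b 0 + 2⁻¹) := by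
  induction n generalizing b with
  | zero => simp [finCFValue]
  | succ n ih =>
    have h2 : (2 : ℝ) ≤ finCFValue n fun i => b (i + 1) :=
      le_trans (by exact_mod_cast hb 1) (ih fun i => hb (i + 1)).1
    simp only [finCFValue, mem_Icc, le_add_iff_nonneg_right, add_le_add_iff_left]
    exact ⟨by positivity, inv_anti₀ two_pos h2⟩

theorem two_le_finCFValue (hb : ∀ i, 2 ≤ b i) (n : ℕ) : (2 : ℝ) ≤ finCFValue n b :=
  le_trans (by exact_mod_cast hb 0) (finCFValue_mem_Icc hb n).1

theorem dist_finCFValue_succ_le (hb : ∀ i, 2 ≤ b i) (n : ℕ) :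
    dist (finCFValue n b) (finCFValue (n + 1) b) ≤ 2⁻¹ * 4⁻¹ ^ n := by
  rw [dist_comm, Real.dist_eq]
  induction n generalizing b with
  | zero =>
    have h2 : (2 : ℝ) ≤ b 1 := by exact_mod_cast hb 1
    simpa [finCFValue, abs_of_pos (by positivity : (0 : ℝ) < (b 1 : ℝ)⁻¹)] using
      inv_anti₀ two_pos h2
  | succ n ih =>
    set t : ℕ → ℕ := fun i => b (i + 1)
    have ht : ∀ i, 2 ≤ t i := fun i => hb (i + 1)
    calc |finCFValue (n + 2) b - finCFValue (n + 1) b|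
        = |(finCFValue (n + 1) t)⁻¹ - (finCFValue n t)⁻¹| := by
          simp only [finCFValue, add_sub_add_left_eq_sub, t]
      _ ≤ |finCFValue (n + 1) t - finCFValue n t| / 4 :=
          abs_inv_sub_inv_le_of_two_le (two_le_finCFValue ht _) (two_le_finCFValue ht _)
      _ ≤ 2⁻¹ * 4⁻¹ ^ n / 4 := by gcongr; exact ih ht
      _ = 2⁻¹ * 4⁻¹ ^ (n + 1) := by ring

theorem tendsto_finCFValue (hb : ∀ i, 2 ≤ b i) :
    Tendsto (fun n => finCFValue n b) atTop (nhds (cfValue b)) :=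
  (cauchySeq_of_le_geometric _ _ (by norm_num) (dist_finCFValue_succ_le hb)).tendsto_limUnder

theorem cfValue_mem_Icc (hb : ∀ i, 2 ≤ b i) : cfValue b ∈ Icc (b 0 : ℝ) (b 0 + 2⁻¹) :=
  isClosed_Icc.mem_of_tendsto (tendsto_finCFValue hb) (.of_forall (finCFValue_mem_Icc hb))

theorem cfValue_pos (hb : ∀ i, 2 ≤ b i) : 0 < cfValue b :=
  lt_of_lt_of_le (by exact_mod_cast two_pos.trans_le (hb 0)) (cfValue_mem_Icc hb).1

theorem cfValue_eq_add_inv (hb : ∀ i, 2 ≤ b i) :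
    cfValue b = b 0 + (cfValue fun i => b (i + 1))⁻¹ := by
  have hb' : ∀ i, 2 ≤ b (i + 1) := fun i => hb (i + 1)
  refine tendsto_nhds_unique ((tendsto_finCFValue hb).comp (tendsto_add_atTop_nat 1)) ?_
  exact ((tendsto_finCFValue hb').inv₀ (cfValue_pos hb').ne').const_add _

theorem floor_cfValue (hb : ∀ i, 2 ≤ b i) : ⌊cfValue b⌋ = b 0 := by
  obtain ⟨h₁, h₂⟩ := cfValue_mem_Icc hb
  rw [Int.floor_eq_iff]
  push_cast
  constructor <;> linarith

theorem fract_cfValue (hb : ∀ i, 2 ≤ b i) :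
    Int.fract (cfValue b) = (cfValue fun i => b (i + 1))⁻¹ := by
  rw [Int.fract, floor_cfValue hb, cfValue_eq_add_inv hb]
  push_cast
  ring

theorem inv_fract_cfValue (hb : ∀ i, 2 ≤ b i) :
    (Int.fract (cfValue b))⁻¹ = cfValue fun i => b (i + 1) := by
  rw [fract_cfValue hb, inv_inv]

theorem of_cfValue_s_get? (hb : ∀ i, 2 ≤ b i) (n : ℕ) :
    (of (cfValue b)).s.get? n = some ⟨1, b (n + 1)⟩ := by
  induction n generalizing b with
  | zero =>
    change (of _).s.head = _
    rw [GenContFract.of_s_head, inv_fract_cfValue hb, floor_cfValue fun i => hb (i + 1)]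
    · norm_cast
    · rw [fract_cfValue hb]
      exact inv_ne_zero (cfValue_pos fun i => hb (i + 1)).ne'
  | succ n ih => rw [GenContFract.of_s_succ, inv_fract_cfValue hb, ih fun i => hb (i + 1)]

theorem of_cfValue_not_terminates (hb : ∀ i, 2 ≤ b i) : ¬(of (cfValue b)).Terminates := by
  rintro ⟨n, hn⟩
  exact Option.some_ne_none _ ((of_cfValue_s_get? hb n).symm.trans hn)

end TwoLe

def branchProd (s : ℕ → Fin 2) : ℕ → ℕ
  | 0 => 1
  | n + 1 => branchProd s n * (branchProd s n ^ n + s n + 2)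

/-- The two choices `branchQuot s (n + 1) ∈ {v, v + 1}`, `v = branchProd s n ^ n + 1`, where
`branchProd s n = ∏_{1 ≤ i ≤ n} (branchQuot s i + 1)` bounds the `n`-th denominator. -/
def branchQuot (s : ℕ → Fin 2) : ℕ → ℕ
  | 0 => 2
  | n + 1 => branchProd s n ^ n + s n + 1

theorem branchProd_succ (s : ℕ → Fin 2) (n : ℕ) :
    branchProd s (n + 1) = branchProd s n * (branchQuot s (n + 1) + 1) := rfl

theorem branchProd_pos (s : ℕ → Fin 2) (n : ℕ) : 0 < branchProd s n := by
  induction n with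
  | zero => exact Nat.one_pos
  | succ n ih => exact Nat.mul_pos ih (by omega)

theorem two_le_branchQuot (s : ℕ → Fin 2) (n : ℕ) : 2 ≤ branchQuot s n := by
  cases n with
  | zero => rfl
  | succ n =>
    have := Nat.one_le_pow n _ (branchProd_pos s n)
    simp only [branchQuot]
    omega

theorem eq_of_branchQuot_succ_eq {s s' : ℕ → Fin 2}
    (hq : ∀ n, branchQuot s (n + 1) = branchQuot s' (n + 1)) : s = s' := by
  have hP : ∀ n, branchProd s n = branchProd s' n := by
    intro n
    induction n with
    | zero => rfl
    | succ n ih => rw [branchProd_succ, branchProd_succ, ih, hq]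
  funext n
  have := hq n
  simp only [branchQuot, hP n] at this
  exact Fin.val_injective (by omega)

theorem of_cfValue_branchQuot_den_le (s : ℕ → Fin 2) (n : ℕ) :
    (of (cfValue (branchQuot s))).dens n ≤ branchProd s n := by
  induction n with
  | zero => simp [GenContFract.zeroth_den_eq_one, branchProd]
  | succ n ih =>
    refine (GenContFract.den_succ_le_of_s_get? (of_cfValue_s_get? (two_le_branchQuot s) n)).trans ?_
    rw [branchProd_succ, mul_comm]
    push_cast
    gcongr

theorem ultraStrongLiouville_cfValue_branchQuot (s : ℕ → Fin 2) :
    UltraStrongLiouville (cfValue (branchQuot s)) := by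
  have hb := two_le_branchQuot s
  refine fun n _ => ⟨abs_pos.mpr (sub_ne_zero.mpr
    (GenContFract.ne_convs_of_not_terminates (of_cfValue_not_terminates hb) n)), ?_⟩
  refine GenContFract.abs_sub_convs_lt_one_div_den_pow (of_cfValue_s_get? hb n) ?_
  calc (of (cfValue (branchQuot s))).dens n ^ n ≤ (branchProd s n : ℝ) ^ n :=
        pow_le_pow_left₀ GenContFract.zero_le_of_den (of_cfValue_branchQuot_den_le s n) n
    _ < branchQuot s (n + 1) := by
        simp only [branchQuot]
        push_cast
        linarith [(s n).is_lt]

theorem cfValue_branchQuot_injective : Function.Injective fun s => cfValue (branchQuot s) := by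
  intro s s' (h : cfValue _ = cfValue _)
  refine eq_of_branchQuot_succ_eq fun n => ?_
  have := of_cfValue_s_get? (two_le_branchQuot s) n
  rw [h, of_cfValue_s_get? (two_le_branchQuot s') n] at this
  simpa [eq_comm] using this

/-- The set of ultra-strong Liouville numbers is uncountable. -/
theorem stmt_5 : ¬ ({ξ : ℝ | UltraStrongLiouville ξ}).Countable := by
  intro hc
  have : Uncountable (ℕ → Fin 2) :=
    Cardinal.aleph0_lt_mk_iff.mp (by simpa using Cardinal.cantor Cardinal.aleph0)
  have := hc.to_subtype
  refine not_countable (Function.Injective.countable (f := fun s =>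
    (⟨_, ultraStrongLiouville_cfValue_branchQuot s⟩ : {ξ : ℝ | UltraStrongLiouville ξ})) ?_)
  exact fun s s' h => cfValue_branchQuot_injective (congrArg Subtype.val h)
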